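/- Let I be an ideal on ω. Then SL(I) equals the weak-star closed convex hull in the dual of ℓ∞ of the set {f_F : F ∈ Ult(I)}, where f_F(x) = F-lim x. -/

import Mathlib

open Filter Topology

noncomputable section

abbrev LInf : Type := lp (fun _ : ℕ => ℝ) (⊤ : ENNReal)

def indic (A : Set ℕ) : LInf :=
  ⟨A.indicator (fun _ => (1:ℝ)), memℓp_infty ⟨1, by
    rintro r ⟨n, rfl⟩
    by_cases h : n ∈ A <;> simp [Set.indicator, h]⟩⟩

def IsIdealOmega (I : Set (Set ℕ)) : Prop :=
  (∀ A B : Set ℕ, A ∈ I → B ⊆ A → B ∈ I) ∧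
  (∀ A B : Set ℕ, A ∈ I → B ∈ I → A ∪ B ∈ I) ∧
  (Set.univ : Set ℕ) ∉ I ∧
  (∀ A : Set ℕ, A.Finite → A ∈ I)

def SLI (I : Set (Set ℕ)) : Set (LInf →L[ℝ] ℝ) :=
  {f | (∀ x : LInf, (∀ n, 0 ≤ x n) → 0 ≤ f x) ∧
       (∀ (x : LInf) (a : ℝ), Tendsto (fun n => x n) atTop (𝓝 a) → f x = a) ∧
       (∀ A ∈ I, f (indic A) = 0)}

def UltI (I : Set (Set ℕ)) : Set (Ultrafilter ℕ) :=
  {F | (↑F : Filter ℕ) ≤ cofinite ∧ ∀ A ∈ I, Aᶜ ∈ F}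

def IClusterPoint (I : Set (Set ℕ)) (x : ℕ → ℝ) (η : ℝ) : Prop :=
  ∀ ε > 0, {n | |x n - η| ≤ ε} ∉ I

def IConv (I : Set (Set ℕ)) (x : ℕ → ℝ) (η : ℝ) : Prop :=
  ∀ ε > 0, {n | ε ≤ |x n - η|} ∈ I

def eone : LInf := indic Set.univ

def SLIw (I : Set (Set ℕ)) : Set (WeakDual ℝ LInf) :=
  {f | (∀ x : LInf, (∀ n, 0 ≤ x n) → 0 ≤ f x) ∧
       (∀ (x : LInf) (a : ℝ), Tendsto (fun n => x n) atTop (𝓝 a) → f x = a) ∧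
       (∀ A ∈ I, f (indic A) = 0)}

def dualFilter (I : Set (Set ℕ)) (hI : IsIdealOmega I) : Filter ℕ where
  sets := {B | Bᶜ ∈ I}
  univ_sets := by simpa using hI.2.2.2 ∅ Set.finite_empty
  sets_of_superset := fun hB hBC => hI.1 _ _ hB (Set.compl_subset_compl.mpr hBC)
  inter_sets := by
    intro B C hB hC
    simp only [Set.mem_setOf_eq, Set.compl_inter]
    exact hI.2.1 _ _ hB hC

lemma exists_ultra {I : Set (Set ℕ)} (hI : IsIdealOmega I) {A : Set ℕ} (hA : A ∉ I) :
    ∃ F : Ultrafilter ℕ, F ∈ UltI I ∧ A ∈ F := by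
  have hdle : dualFilter I hI ≤ cofinite := by
    intro s hs
    exact hI.1 _ _ (hI.2.2.2 _ hs) le_rfl
  have hne : (dualFilter I hI ⊓ 𝓟 A).NeBot := by
    rw [inf_principal_neBot_iff]
    intro U hU
    by_contra h
    rw [Set.not_nonempty_iff_eq_empty] at h
    exact hA (hI.1 _ _ hU (fun n hn hnU =>
      Set.eq_empty_iff_forall_notMem.mp h n ⟨hnU, hn⟩))
  refine ⟨Ultrafilter.of (dualFilter I hI ⊓ 𝓟 A), ⟨?_, ?_⟩, ?_⟩
  · exact le_trans (le_trans (Ultrafilter.of_le _) inf_le_left) hdle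
  · intro B hB
    exact le_trans (Ultrafilter.of_le _) inf_le_left (show Bᶜᶜ ∈ I by simpa using hB)
  · exact le_trans (Ultrafilter.of_le _) inf_le_right (Filter.mem_principal_self A)

lemma exists_ulim (F : Ultrafilter ℕ) (x : LInf) :
    ∃ a : ℝ, |a| ≤ ‖x‖ ∧ Tendsto (fun n => x n) (F : Filter ℕ) (𝓝 a) := by
  have hc : IsCompact (Set.Icc (-‖x‖) ‖x‖) := isCompact_Icc
  have hmem : ∀ n, x n ∈ Set.Icc (-‖x‖) ‖x‖ := by
    intro n
    have := lp.norm_apply_le_norm ENNReal.top_ne_zero x n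
    rw [Real.norm_eq_abs] at this
    exact abs_le.mp this
  have hle : (F.map (fun n => x n) : Filter ℝ) ≤ 𝓟 (Set.Icc (-‖x‖) ‖x‖) := by
    rw [Filter.le_principal_iff]
    exact Filter.mem_map.mpr (Filter.univ_mem' (fun n => hmem n))
  obtain ⟨a, ha, hconv⟩ := hc.ultrafilter_le_nhds (F.map (fun n => x n)) hle
  exact ⟨a, abs_le.mpr ⟨ha.1, ha.2⟩, hconv⟩

def ulim (F : Ultrafilter ℕ) (x : LInf) : ℝ := (exists_ulim F x).choose

lemma ulim_tendsto (F : Ultrafilter ℕ) (x : LInf) :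
    Tendsto (fun n => x n) (F : Filter ℕ) (𝓝 (ulim F x)) := (exists_ulim F x).choose_spec.2

lemma ulim_abs (F : Ultrafilter ℕ) (x : LInf) : |ulim F x| ≤ ‖x‖ := (exists_ulim F x).choose_spec.1

lemma ulim_eq (F : Ultrafilter ℕ) {x : LInf} {a : ℝ}
    (h : Tendsto (fun n => x n) (F : Filter ℕ) (𝓝 a)) : ulim F x = a :=
  tendsto_nhds_unique (ulim_tendsto F x) h

def ulimCLM (F : Ultrafilter ℕ) : LInf →L[ℝ] ℝ :=
  LinearMap.mkContinuous
    { toFun := ulim F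
      map_add' := by
        intro x y
        refine ulim_eq F ?_
        have : Tendsto (fun n => x n + y n) (F : Filter ℕ) (𝓝 (ulim F x + ulim F y)) :=
          (ulim_tendsto F x).add (ulim_tendsto F y)
        refine this.congr (fun n => ?_)
        simp [lp.coeFn_add]
      map_smul' := by
        intro c x
        refine ulim_eq F ?_
        have : Tendsto (fun n => c * x n) (F : Filter ℕ) (𝓝 (c * ulim F x)) :=
          (ulim_tendsto F x).const_mul c
        refine this.congr (fun n => ?_)
        simp [lp.coeFn_smul] }
    1 (by
      intro x
      simp only [LinearMap.coe_mk, AddHom.coe_mk, one_mul, Real.norm_eq_abs]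
      exact ulim_abs F x)

def ulimW (F : Ultrafilter ℕ) : WeakDual ℝ LInf := ulimCLM F

lemma ulimW_apply (F : Ultrafilter ℕ) (x : LInf) : ulimW F x = ulim F x := rfl


def USet (I : Set (Set ℕ)) : Set (WeakDual ℝ LInf) :=
  {f : WeakDual ℝ LInf | ∃ F ∈ UltI I,
    ∀ x : LInf, Tendsto (fun n => x n) (↑F : Filter ℕ) (𝓝 (f x))}

lemma ulimW_mem_USet {I : Set (Set ℕ)} {F : Ultrafilter ℕ} (hF : F ∈ UltI I) :
    ulimW F ∈ USet I := ⟨F, hF, fun x => ulim_tendsto F x⟩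

-- S ⊆ SLIw
lemma USet_subset_SLIw {I : Set (Set ℕ)} (hI : IsIdealOmega I) : USet I ⊆ SLIw I := by
  rintro f ⟨F, ⟨hFcof, hFI⟩, hf⟩
  refine ⟨?_, ?_, ?_⟩
  · intro x hx
    exact ge_of_tendsto' (hf x) hx
  · intro x a hx
    have hFatTop : (F : Filter ℕ) ≤ atTop := by rwa [← Nat.cofinite_eq_atTop]
    exact tendsto_nhds_unique (hf x) (hx.mono_left hFatTop)
  · intro A hA
    have h0 : ∀ᶠ n in (F : Filter ℕ), (indic A) n = 0 := by
      filter_upwards [hFI A hA] with n hn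
      simp [indic, Set.indicator_of_notMem hn]
    have : Tendsto (fun n => (indic A) n) (F : Filter ℕ) (𝓝 0) :=
      Tendsto.congr' (h0.mono fun n h => h.symm) tendsto_const_nhds
    exact tendsto_nhds_unique (hf (indic A)) this

lemma SLIw_convex (I : Set (Set ℕ)) : Convex ℝ (SLIw I) := by
  rintro f hf g hg a b ha hb hab
  refine ⟨?_, ?_, ?_⟩
  · intro x hx
    have : (a • f + b • g) x = a * f x + b * g x := rfl
    rw [this]
    have := hf.1 x hx
    have := hg.1 x hx
    positivity
  · intro x c hx
    have : (a • f + b • g) x = a * f x + b * g x := rfl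
    rw [this, hf.2.1 x c hx, hg.2.1 x c hx, ← add_mul, hab, one_mul]
  · intro A hA
    have : (a • f + b • g) (indic A) = a * f (indic A) + b * g (indic A) := rfl
    rw [this, hf.2.2 A hA, hg.2.2 A hA]; ring

lemma SLIw_closed (I : Set (Set ℕ)) : IsClosed (SLIw I) := by
  have h1 : IsClosed {f : WeakDual ℝ LInf | ∀ x : LInf, (∀ n, 0 ≤ x n) → 0 ≤ f x} := by
    rw [Set.setOf_forall]
    refine isClosed_iInter fun x => ?_
    by_cases hx : ∀ n, 0 ≤ x n
    · have he : {f : WeakDual ℝ LInf | (∀ n, 0 ≤ x n) → 0 ≤ f x} =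
          (fun f : WeakDual ℝ LInf => f x) ⁻¹' Set.Ici 0 := by
        ext f; simp [hx]
      rw [he]
      exact isClosed_Ici.preimage (WeakDual.eval_continuous x)
    · have he : {f : WeakDual ℝ LInf | (∀ n, 0 ≤ x n) → 0 ≤ f x} = Set.univ := by
        ext f; simp [hx]
      rw [he]; exact isClosed_univ
  have h2 : IsClosed {f : WeakDual ℝ LInf |
      ∀ (x : LInf) (a : ℝ), Tendsto (fun n => x n) atTop (𝓝 a) → f x = a} := by
    rw [Set.setOf_forall]
    refine isClosed_iInter fun x => ?_
    rw [Set.setOf_forall]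
    refine isClosed_iInter fun a => ?_
    by_cases hx : Tendsto (fun n => x n) atTop (𝓝 a)
    · have he : {f : WeakDual ℝ LInf | Tendsto (fun n => x n) atTop (𝓝 a) → f x = a} =
          (fun f : WeakDual ℝ LInf => f x) ⁻¹' {a} := by
        ext f; simp [hx]
      rw [he]
      exact isClosed_singleton.preimage (WeakDual.eval_continuous x)
    · have he : {f : WeakDual ℝ LInf | Tendsto (fun n => x n) atTop (𝓝 a) → f x = a} =
          Set.univ := by
        ext f; simp [hx]
      rw [he]; exact isClosed_univ
  have h3 : IsClosed {f : WeakDual ℝ LInf | ∀ A ∈ I, f (indic A) = 0} := by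
    rw [Set.setOf_forall]
    refine isClosed_iInter fun A => ?_
    rw [Set.setOf_forall]
    refine isClosed_iInter fun hA => ?_
    have he : {f : WeakDual ℝ LInf | f (indic A) = 0} =
        (fun f : WeakDual ℝ LInf => f (indic A)) ⁻¹' {0} := rfl
    rw [he]
    exact isClosed_singleton.preimage (WeakDual.eval_continuous (indic A))
  have : SLIw I = _ ∩ (_ ∩ _) := rfl
  exact (h1.inter (h2.inter h3))

def limsSet (I : Set (Set ℕ)) (y : LInf) : Set ℝ :=
  {a | ∃ F ∈ UltI I, Tendsto (fun n => y n) (F : Filter ℕ) (𝓝 a)}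

lemma limsSet_nonempty {I : Set (Set ℕ)} (hI : IsIdealOmega I) (y : LInf) :
    (limsSet I y).Nonempty := by
  obtain ⟨F, hF, -⟩ := exists_ultra hI hI.2.2.1
  exact ⟨ulim F y, F, hF, ulim_tendsto F y⟩

lemma limsSet_bddAbove (I : Set (Set ℕ)) (y : LInf) : BddAbove (limsSet I y) := by
  refine ⟨‖y‖, ?_⟩
  rintro a ⟨F, hF, ha⟩
  refine le_of_tendsto ha (Filter.univ_mem' fun n => ?_)
  have := lp.norm_apply_le_norm ENNReal.top_ne_zero y n
  rw [Real.norm_eq_abs] at this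
  exact (abs_le.mp this).2

lemma coe_comb (a c : ℝ) (u v w : LInf) (n : ℕ) :
    (a • u + c • v - w) n = a * u n + c * v n - w n := by
  simp [lp.coeFn_add, lp.coeFn_sub, lp.coeFn_smul]
  rfl

lemma eone_apply' (n : ℕ) : (eone : LInf) n = 1 := by
  simp [eone, indic]

lemma f_eone {I : Set (Set ℕ)} {f : WeakDual ℝ LInf} (hf : f ∈ SLIw I) : f eone = 1 := by
  refine hf.2.1 eone 1 ?_
  have : (fun n => (eone : LInf) n) = fun _ => (1:ℝ) := funext eone_apply'
  rw [this]
  exact tendsto_const_nhds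

lemma key_ineq {I : Set (Set ℕ)} (hI : IsIdealOmega I) {f : WeakDual ℝ LInf}
    (hf : f ∈ SLIw I) (y : LInf) : f y ≤ sSup (limsSet I y) := by
  set s := sSup (limsSet I y) with hs
  refine le_of_forall_pos_le_add fun ε hε => ?_
  set A : Set ℕ := {n | s + ε ≤ y n} with hA
  have hAI : A ∈ I := by
    by_contra hAn
    obtain ⟨F, hF, hAF⟩ := exists_ultra hI hAn
    have h1 : ulim F y ≤ s := le_csSup (limsSet_bddAbove I y) ⟨F, hF, ulim_tendsto F y⟩
    have h2 : s + ε ≤ ulim F y := by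
      refine ge_of_tendsto (ulim_tendsto F y) ?_
      filter_upwards [hAF] with n hn
      exact hn
    linarith
  set C : ℝ := ‖y‖ + |s + ε| with hC
  set z : LInf := (s + ε) • eone + C • indic A - y with hz
  have hzpos : ∀ n, 0 ≤ z n := by
    intro n
    rw [hz, coe_comb]
    have hyb := lp.norm_apply_le_norm ENNReal.top_ne_zero y n
    rw [Real.norm_eq_abs] at hyb
    by_cases hn : n ∈ A
    · have : (indic A : LInf) n = 1 := by simp [indic, Set.indicator_of_mem hn]
      rw [this, eone_apply']
      have := (abs_le.mp hyb).2
      have := neg_abs_le (s + ε)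
      simp only [mul_one]
      rw [hC]
      linarith
    · have : (indic A : LInf) n = 0 := by simp [indic, Set.indicator_of_notMem hn]
      rw [this, eone_apply']
      have : ¬ (s + ε ≤ y n) := hn
      push_neg at this
      simp only [mul_one, mul_zero]
      linarith
  have hfz : 0 ≤ f z := hf.1 z hzpos
  have hfz' : f z = (s + ε) * 1 + C * 0 - f y := by
    rw [hz, map_sub, map_add, map_smul, map_smul, f_eone hf, hf.2.2 A hAI]
    rfl
  rw [hfz'] at hfz
  linarith

lemma wd_isEmbedding : IsEmbedding (fun (g : WeakDual ℝ LInf) (y : LInf) => g y) := by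
  have : Function.Injective (topDualPairing ℝ LInf) := fun f g h =>
    ContinuousLinearMap.coe_injective h
  exact WeakBilin.isEmbedding this

lemma main_closure {I : Set (Set ℕ)} (hI : IsIdealOmega I) {f : WeakDual ℝ LInf}
    (hf : f ∈ SLIw I) : f ∈ closure (convexHull ℝ (USet I)) := by
  classical
  rw [mem_closure_iff_nhds]
  intro t ht
  rw [wd_isEmbedding.toIsInducing.nhds_eq_comap, nhds_pi, Filter.mem_comap] at ht
  obtain ⟨V, hV, hVt⟩ := ht
  rw [Filter.mem_pi] at hV
  obtain ⟨Iset, hIfin, t', ht', hpi⟩ := hV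
  -- radii
  have hr : ∀ x : LInf, ∃ δ : ℝ, 0 < δ ∧ (x ∈ Iset → Metric.ball (f x) δ ⊆ t' x) := by
    intro x
    by_cases hx : x ∈ Iset
    · obtain ⟨δ, hδ, hball⟩ := Metric.mem_nhds_iff.mp (ht' x)
      exact ⟨δ, hδ, fun _ => hball⟩
    · exact ⟨1, one_pos, fun h => absurd h hx⟩
  choose r hrpos hrsub using hr
  set tF : Finset LInf := hIfin.toFinset with htF
  have hne : (insert (1:ℝ) (tF.image r)).Nonempty := Finset.insert_nonempty _ _
  obtain ⟨ε, hε, hεle⟩ : ∃ ε > 0, ∀ x ∈ tF, ε ≤ r x := by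
    refine ⟨(insert (1:ℝ) (tF.image r)).min' hne, ?_, ?_⟩
    · refine (Finset.lt_min'_iff _ hne).mpr ?_
      intro b hb
      rcases Finset.mem_insert.mp hb with rfl | hb
      · exact one_pos
      · obtain ⟨x, -, rfl⟩ := Finset.mem_image.mp hb
        exact hrpos x
    · intro x hx
      exact Finset.min'_le _ _ (Finset.mem_insert.mpr
        (Or.inr (Finset.mem_image.mpr ⟨x, hx, rfl⟩)))
  -- finite dimensional reduction
  set ι := {x : LInf // x ∈ tF}
  let T : WeakDual ℝ LInf →ₗ[ℝ] (ι → ℝ) :=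
    { toFun := fun g => fun i => g (i : LInf)
      map_add' := fun g h => rfl
      map_smul' := fun c g => rfl }
  set D : Set (ι → ℝ) := T '' (convexHull ℝ (USet I)) with hD
  have hDconv : Convex ℝ D := (convex_convexHull ℝ (USet I)).linear_image T
  -- evaluation identity
  have hgy : ∀ g : WeakDual ℝ LInf, ∀ φ : (ι → ℝ) →L[ℝ] ℝ,
      φ (T g) = g (∑ i : ι, φ (Pi.single i 1) • (i : LInf)) := by
    intro g φ
    have h1 : T g = ∑ i : ι, (T g i) • (Pi.single i (1:ℝ) : ι → ℝ) := by
      conv_lhs => rw [← Finset.univ_sum_single (T g)]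
      refine Finset.sum_congr rfl fun i _ => ?_
      rw [← Pi.single_smul, smul_eq_mul, mul_one]
    rw [h1, map_sum, map_sum]
    congr 1
    funext i
    rw [map_smul, map_smul, smul_eq_mul, smul_eq_mul]
    show (T g i) * φ (Pi.single i 1) = φ (Pi.single i 1) * g (i : LInf)
    rw [mul_comm]
    rfl
  -- T f ∈ closure D
  have hTf : T f ∈ closure D := by
    by_contra hTf
    obtain ⟨φ, u, hu1, hu2⟩ :=
      geometric_hahn_banach_closed_point (hDconv.closure) isClosed_closure hTf
    set y : LInf := ∑ i : ι, φ (Pi.single i 1) • (i : LInf) with hy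
    have hfy : f y ≤ sSup (limsSet I y) := key_ineq hI hf y
    have hsup : sSup (limsSet I y) ≤ u := by
      refine csSup_le (limsSet_nonempty hI y) ?_
      rintro a ⟨F, hF, ha⟩
      have : a = ulim F y := (ulim_eq F ha).symm
      rw [this]
      have hmem : T (ulimW F) ∈ closure D :=
        subset_closure ⟨ulimW F, subset_convexHull ℝ _ (ulimW_mem_USet hF), rfl⟩
      have := hu1 _ hmem
      rw [hgy (ulimW F) φ] at this
      exact le_of_lt this
    rw [hgy f φ] at hu2
    linarith
  -- extract approximant
  obtain ⟨b, hbD, hdist⟩ := Metric.mem_closure_iff.mp hTf ε hε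
  obtain ⟨g, hg, rfl⟩ := hbD
  refine ⟨g, ?_, hg⟩
  apply hVt
  apply hpi
  intro x hx
  have hxF : x ∈ tF := hIfin.mem_toFinset.mpr hx
  have hco : dist (f x) (g x) ≤ dist (T f) (T g) := dist_le_pi_dist (T f) (T g) ⟨x, hxF⟩
  have : dist (f x) (g x) < ε := lt_of_le_of_lt hco hdist
  refine hrsub x hx ?_
  rw [Metric.mem_ball, dist_comm]
  exact lt_of_lt_of_le this (hεle x hxF)

theorem stmt8 (I : Set (Set ℕ)) (hI : IsIdealOmega I) :
    SLIw I = closure (convexHull ℝ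
      {f : WeakDual ℝ LInf | ∃ F ∈ UltI I,
        ∀ x : LInf, Tendsto (fun n => x n) (↑F : Filter ℕ) (𝓝 (f x))}) := by
  apply Set.Subset.antisymm
  · intro f hf
    exact main_closure hI hf
  · have h1 : convexHull ℝ (USet I) ⊆ SLIw I :=
      convexHull_min (USet_subset_SLIw hI) (SLIw_convex I)
    calc closure (convexHull ℝ (USet I)) ⊆ closure (SLIw I) := closure_mono h1
      _ = SLIw I := (SLIw_closed I).closure_eq
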